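/- arXiv:1601.00292 — 3 statements merged into one kernel-verified Lean document; each statement's English description precedes it below -/
import Mathlib

section
/- Let Toep_n(ℂ) be the space of n×n complex Toeplitz matrices and let β_t : Toep_n(ℂ) × ℂ^n → ℂ^n, (A, x) ↦ Ax, be the Toeplitz matrix-vector product with structure tensor μ_t. Then rank(μ_t) = 2n − 1. -/
open Filter Topology

/-- `HasTensorRankLE 𝕜 β r` means that the bilinear operation `β` admits a decomposition
into `r` rank-one terms, i.e., the structure tensor `μ_β ∈ U* ⊗ V* ⊗ W` of `β` can be
written as `∑ i, f i ⊗ g i ⊗ w i` with `r` summands; equivalently `rank (μ_β) ≤ r`. -/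
def HasTensorRankLE (𝕜 : Type*) [Field 𝕜] {U V W : Type*}
    [AddCommGroup U] [Module 𝕜 U] [AddCommGroup V] [Module 𝕜 V]
    [AddCommGroup W] [Module 𝕜 W] (β : U → V → W) (r : ℕ) : Prop :=
  ∃ (f : Fin r → (U →ₗ[𝕜] 𝕜)) (g : Fin r → (V →ₗ[𝕜] 𝕜)) (w : Fin r → W),
    ∀ u v, β u v = ∑ i, (f i u * g i v) • w i

/-- The rank of the structure tensor `μ_β` of a bilinear operation `β`. -/
noncomputable def tensorRank (𝕜 : Type*) [Field 𝕜] {U V W : Type*}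
    [AddCommGroup U] [Module 𝕜 U] [AddCommGroup V] [Module 𝕜 V]
    [AddCommGroup W] [Module 𝕜 W] (β : U → V → W) : ℕ :=
  sInf {r | HasTensorRankLE 𝕜 β r}

/-- The border rank of the structure tensor `μ_β` of a bilinear operation `β` : the least `r`
such that `μ_β` is a limit of a sequence of tensors of rank at most `r` (convergence of the
tensors in the finite-dimensional space `U* ⊗ V* ⊗ W` being equivalent to pointwise
convergence of the corresponding bilinear maps). -/
noncomputable def borderRank (𝕜 : Type*) [Field 𝕜] {U V W : Type*}
    [AddCommGroup U] [Module 𝕜 U] [AddCommGroup V] [Module 𝕜 V]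
    [AddCommGroup W] [Module 𝕜 W] [TopologicalSpace W] (β : U → V → W) : ℕ :=
  sInf {r | ∃ s : ℕ → (U → V → W), (∀ m, HasTensorRankLE 𝕜 (s m) r) ∧
    ∀ u v, Tendsto (fun m => s m u v) atTop (𝓝 (β u v))}

/-- The space `Toep_n(ℂ)` of `n × n` complex Toeplitz matrices: matrices whose `(i,j)` entry
depends only on `j − i` (constant along diagonals). -/
noncomputable def toeplitzSpace (n : ℕ) : Submodule ℂ (Matrix (Fin n) (Fin n) ℂ) where
  carrier := {A | ∀ i j k l : Fin n, (j : ℤ) - (i : ℤ) = (l : ℤ) - (k : ℤ) → A i j = A k l}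
  add_mem' := by
    intro A B hA hB i j k l h
    simp [Matrix.add_apply, hA i j k l h, hB i j k l h]
  zero_mem' := by intro i j k l _; simp
  smul_mem' := by
    intro c A hA i j k l h
    simp [Matrix.smul_apply, hA i j k l h]

/-! Index the diagonals of an `n × n` matrix cyclically by `ZMod (2n - 1)`: every Toeplitz matrix
is `(i, j) ↦ c (i - j)` for a unique `c`, and then `Ax` is the cyclic convolution of `c` with `x`.
The discrete Fourier transform diagonalises convolution, so the product is a sum of one rank-one
term per character of `ZMod (2n - 1)`. Conversely `A ↦ (x ↦ Ax)` is injective, so the linear forms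
on `Toep_n` of any decomposition separate points, and there are at least `dim Toep_n = 2n - 1`
of them. -/

section TensorRank

variable {𝕜 : Type*} [Field 𝕜] {U U' V W : Type*} [AddCommGroup U] [Module 𝕜 U]
  [AddCommGroup U'] [Module 𝕜 U'] [AddCommGroup V] [Module 𝕜 V] [AddCommGroup W] [Module 𝕜 W]
  {β : U → V → W} {r : ℕ}

lemma hasTensorRankLE_card_of_eq_sum {ι : Type*} [Fintype ι] (f : ι → U →ₗ[𝕜] 𝕜)
    (g : ι → V →ₗ[𝕜] 𝕜) (w : ι → W) (h : ∀ u v, β u v = ∑ i, (f i u * g i v) • w i) :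
    HasTensorRankLE 𝕜 β (Fintype.card ι) := by
  let e := (Fintype.equivFin ι).symm
  exact ⟨f ∘ e, g ∘ e, w ∘ e, fun u v => by
    rw [h]; exact (e.sum_comp fun i => (f i u * g i v) • w i).symm⟩

lemma tensorRank_le (h : HasTensorRankLE 𝕜 β r) : tensorRank 𝕜 β ≤ r :=
  Nat.sInf_le h

lemma HasTensorRankLE.of_surjective_left {γ : U' → V → W} (h : HasTensorRankLE 𝕜 γ r)
    (a : U' →ₗ[𝕜] U) (ha : Function.Surjective a) (hβγ : ∀ u v, β (a u) v = γ u v) :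
    HasTensorRankLE 𝕜 β r := by
  obtain ⟨s, hs⟩ := a.exists_rightInverse_of_surjective (LinearMap.range_eq_top.mpr ha)
  obtain ⟨f, g, w, hfgw⟩ := h
  refine ⟨fun i => f i ∘ₗ s, g, w, fun u v => ?_⟩
  have hu : a (s u) = u := LinearMap.congr_fun hs u
  conv_lhs => rw [← hu, hβγ, hfgw]
  rfl

lemma HasTensorRankLE.finrank_le (h : HasTensorRankLE 𝕜 β r) (hβ : Function.Injective β) :
    Module.finrank 𝕜 U ≤ r := by
  obtain ⟨f, g, w, hfgw⟩ := h
  have hinj : Function.Injective (LinearMap.pi f) := fun u u' huu' => hβ <| funext fun v => by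
    have hf : ∀ i, f i u = f i u' := congrFun huu'
    simp only [hfgw, hf]
  simpa using LinearMap.finrank_le_finrank_of_injective hinj

lemma HasTensorRankLE.finrank_le_tensorRank (h : HasTensorRankLE 𝕜 β r)
    (hβ : Function.Injective β) : Module.finrank 𝕜 U ≤ tensorRank 𝕜 β :=
  HasTensorRankLE.finrank_le (Nat.sInf_mem (s := {r | HasTensorRankLE 𝕜 β r}) ⟨r, h⟩) hβ

end TensorRank

lemma hasTensorRankLE_sum_apply_sub_mul {G ι κ : Type*} [AddCommGroup G] [Fintype G]
    [Fintype ι] (p : κ → G) (q : ι → G) :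
    HasTensorRankLE ℂ (fun (c : G → ℂ) (x : ι → ℂ) (k : κ) => ∑ j, c (p k - q j) * x j)
      (Fintype.card G) := by
  classical
  rw [← AddChar.card_eq]
  refine hasTensorRankLE_card_of_eq_sum
    (fun ψ => Fintype.linearCombination ℂ fun d => ψ d)
    (fun ψ => Fintype.linearCombination ℂ fun j => ψ (q j))
    (fun ψ k => (Fintype.card G : ℂ)⁻¹ * ψ (-p k)) fun c x => funext fun k => ?_
  have hcard : (Fintype.card G : ℂ) ≠ 0 := Nat.cast_ne_zero.mpr Fintype.card_ne_zero
  simp only [Fintype.linearCombination_apply, Finset.sum_apply, Pi.smul_apply, smul_eq_mul]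
  symm
  calc ∑ ψ : AddChar G ℂ, (∑ d, c d • ψ d) * (∑ j, x j • ψ (q j)) *
        ((Fintype.card G : ℂ)⁻¹ * ψ (-p k))
      = ∑ j, ∑ d,
          (Fintype.card G : ℂ)⁻¹ * c d * x j * ∑ ψ : AddChar G ℂ, ψ (d + q j - p k) := by
        simp only [sub_eq_add_neg, AddChar.map_add_eq_mul, Finset.mul_sum, Finset.sum_mul,
          smul_eq_mul]
        rw [Finset.sum_comm]
        refine Finset.sum_congr rfl fun j _ => ?_
        rw [Finset.sum_comm]
        refine Finset.sum_congr rfl fun d _ => Finset.sum_congr rfl fun ψ _ => ?_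
        ring
    _ = ∑ j, c (p k - q j) * x j := by
        refine Finset.sum_congr rfl fun j _ => ?_
        simp only [AddChar.sum_apply_eq_ite, sub_eq_zero, eq_sub_iff_add_eq.symm, mul_ite,
          mul_zero, Finset.sum_ite_eq', Finset.mem_univ, if_true]
        field_simp

def toeplitzOfDiag (n N : ℕ) : (ZMod N → ℂ) →ₗ[ℂ] toeplitzSpace n where
  toFun c := ⟨fun i j => c ((i : ℤ) - (j : ℤ)), fun i j k l h => by
    have hik : (i : ℤ) - j = k - l := by omega
    simp only [← Int.cast_sub, hik]⟩
  map_add' _ _ := rfl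
  map_smul' _ _ := rfl

section Toeplitz

variable {n N : ℕ}

lemma valMinAbs_intCast_sub [NeZero N] (hN : 2 * n ≤ N + 1) (i j : Fin n) :
    (((i : ℤ) : ZMod N) - ((j : ℤ) : ZMod N)).valMinAbs = i - j := by
  have := i.isLt
  have := j.isLt
  refine (ZMod.valMinAbs_spec _ _).mpr ⟨by push_cast; rfl, ?_⟩
  constructor <;> omega

lemma exists_intCast_sub_eq [NeZero N] (hN : N < 2 * n) (d : ZMod N) :
    ∃ i j : Fin n, ((i : ℤ) : ZMod N) - ((j : ℤ) : ZMod N) = d := by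
  have ht := d.natAbs_valMinAbs_le
  refine ⟨⟨d.valMinAbs.toNat, by omega⟩, ⟨(-d.valMinAbs).toNat, by omega⟩, ?_⟩
  simp only [← Int.cast_sub, Int.toNat_sub_toNat_neg, ZMod.coe_valMinAbs]

lemma toeplitzOfDiag_injective [NeZero N] (hN : N < 2 * n) :
    Function.Injective (toeplitzOfDiag n N) := by
  intro c c' hcc'
  funext d
  obtain ⟨i, j, rfl⟩ := exists_intCast_sub_eq hN d
  exact congrFun (congrFun (congrArg Subtype.val hcc') i) j

lemma toeplitzOfDiag_surjective [NeZero N] (hN : 2 * n ≤ N + 1) :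
    Function.Surjective (toeplitzOfDiag n N) := by
  rintro ⟨A, hA⟩
  let diag : Fin n × Fin n → ZMod N := fun p => ((p.1 : ℤ) : ZMod N) - ((p.2 : ℤ) : ZMod N)
  have hdiag : Function.FactorsThrough (fun p : Fin n × Fin n => A p.1 p.2) diag :=
    fun p q hpq => by
      have := congrArg ZMod.valMinAbs hpq
      rw [valMinAbs_intCast_sub hN, valMinAbs_intCast_sub hN] at this
      exact hA _ _ _ _ (by omega)
  refine ⟨Function.extend diag (fun p => A p.1 p.2) 0, Subtype.ext ?_⟩
  funext i j
  exact hdiag.extend_apply 0 (i, j)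

end Toeplitz

lemma finrank_toeplitzSpace (n : ℕ) : Module.finrank ℂ (toeplitzSpace n) = 2 * n - 1 := by
  rcases n with _ | m
  · exact Module.finrank_zero_of_subsingleton
  · have e := LinearEquiv.ofBijective (toeplitzOfDiag (m + 1) (2 * m + 1))
      ⟨toeplitzOfDiag_injective (by omega), toeplitzOfDiag_surjective (by omega)⟩
    rw [← e.finrank_eq, Module.finrank_fintype_fun_eq_card, ZMod.card]
    omega

lemma hasTensorRankLE_toeplitz_mulVec (n : ℕ) :
    HasTensorRankLE ℂ (fun (A : toeplitzSpace n) (x : Fin n → ℂ) =>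
      (A : Matrix (Fin n) (Fin n) ℂ).mulVec x) (2 * n - 1) := by
  rcases n with _ | m
  · exact ⟨Fin.elim0, Fin.elim0, Fin.elim0, fun _ _ => Subsingleton.elim _ _⟩
  · let cast : Fin (m + 1) → ZMod (2 * m + 1) := fun i => ((i : ℤ) : ZMod (2 * m + 1))
    have hconv := hasTensorRankLE_sum_apply_sub_mul (G := ZMod (2 * m + 1)) cast cast
    rw [ZMod.card] at hconv
    exact hconv.of_surjective_left _ (toeplitzOfDiag_surjective (by omega)) fun _ _ => rfl

lemma toeplitz_mulVec_injective (n : ℕ) :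
    Function.Injective fun (A : toeplitzSpace n) (x : Fin n → ℂ) =>
      (A : Matrix (Fin n) (Fin n) ℂ).mulVec x :=
  fun _ _ h => Subtype.ext (Matrix.mulVec_injective h)

/-- The structure tensor `μ_t` of the Toeplitz matrix-vector product
`Toep_n(ℂ) × ℂ^n → ℂ^n`, `(A, x) ↦ Ax`, has rank `2n − 1`. -/
theorem tensorRank_toeplitz_mulVec (n : ℕ) :
    tensorRank ℂ (fun (A : toeplitzSpace n) (x : Fin n → ℂ) =>
        (A : Matrix (Fin n) (Fin n) ℂ).mulVec x) = 2 * n - 1 := by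
  have hup := hasTensorRankLE_toeplitz_mulVec n
  refine le_antisymm (tensorRank_le hup) ?_
  rw [← finrank_toeplitzSpace n]
  exact hup.finrank_le_tensorRank (toeplitz_mulVec_injective n)
end

section
/- Let Toep_n(ℂ) be the space of n×n complex Toeplitz matrices and let μ_t be the structure tensor of the Toeplitz matrix-vector product β_t : Toep_n(ℂ) × ℂ^n → ℂ^n. Then brank(μ_t) = 2n − 1. -/
open Filter Topology

/-!
Upper bound: `A *ᵥ x` is a window of the convolution of the diagonals of `A` with `x`, and the
exponents that meet in it differ by less than `2n - 1`. So the cyclic convolution of length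
`2n - 1`, which the discrete Fourier transform turns into `2n - 1` pointwise products, computes
it exactly.

Lower bound: take the `2n - 1` positions in the first row or column, one per diagonal. For two
such positions `p` and `(i, j)`, feeding the tensor the indicator matrix of the diagonal of `p`
and the basis vector `e_j`, and reading coordinate `i`, gives `1` if `p = (i, j)` and `0`
otherwise. Such a slice of a tensor of rank `≤ r` has
matrix rank `≤ r`, and since a nonzero determinant is an open condition it passes to the limit.
-/

open Finset

section BorderRank

variable {𝕜 U V W : Type*} [Field 𝕜] [AddCommGroup U] [Module 𝕜 U] [AddCommGroup V] [Module 𝕜 V]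
  [AddCommGroup W] [Module 𝕜 W]

theorem borderRank_le_of_hasTensorRankLE [TopologicalSpace W] {β : U → V → W} {r : ℕ}
    (h : HasTensorRankLE 𝕜 β r) : borderRank 𝕜 β ≤ r :=
  Nat.sInf_le ⟨fun _ => β, fun _ => h, fun _ _ => tendsto_const_nhds⟩

theorem HasTensorRankLE.rank_le {β : U → V → W} {r : ℕ} (h : HasTensorRankLE 𝕜 β r)
    {ι κ : Type*} [Fintype κ] (u : ι → U) (v : κ → V) (φ : κ → W →ₗ[𝕜] 𝕜) :
    (Matrix.of fun i j => φ j (β (u i) (v j))).rank ≤ r := by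
  obtain ⟨f, g, w, hβ⟩ := h
  have hfactor : (Matrix.of fun i j => φ j (β (u i) (v j))) =
      (Matrix.of fun i k => f k (u i)) * Matrix.of fun k j => g k (v j) * φ j (w k) := by
    ext i j
    simp [hβ, Matrix.mul_apply, mul_assoc]
  rw [hfactor]
  exact (Matrix.rank_mul_le_right _ _).trans
    ((Matrix.rank_le_card_height _).trans (Fintype.card_fin r).le)

theorem card_le_borderRank_of_det_ne_zero [TopologicalSpace 𝕜] [IsTopologicalRing 𝕜] [T1Space 𝕜]
    [TopologicalSpace W] {β : U → V → W} {r₀ : ℕ} (hβ : HasTensorRankLE 𝕜 β r₀)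
    {ι : Type*} [Fintype ι] [DecidableEq ι] (u : ι → U) (v : ι → V) (φ : ι → W →L[𝕜] 𝕜)
    (hdet : (Matrix.of fun i j => φ j (β (u i) (v j))).det ≠ 0) :
    Fintype.card ι ≤ borderRank 𝕜 β := by
  refine le_csInf ⟨r₀, fun _ => β, fun _ => hβ, fun _ _ => tendsto_const_nhds⟩ ?_
  rintro r ⟨s, hs, hlim⟩
  have hdet_lim : Tendsto (fun m => (Matrix.of fun i j => φ j (s m (u i) (v j))).det) atTop
      (𝓝 (Matrix.of fun i j => φ j (β (u i) (v j))).det) :=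
    (continuous_id.matrix_det.tendsto _).comp <| tendsto_pi_nhds.2 fun i =>
      tendsto_pi_nhds.2 fun j => ((φ j).continuous.tendsto _).comp (hlim _ _)
  obtain ⟨m, hm⟩ := (hdet_lim.eventually_ne hdet).exists
  calc Fintype.card ι = (Matrix.of fun i j => φ j (s m (u i) (v j))).rank :=
        (Matrix.rank_of_isUnit _ ((Matrix.isUnit_iff_isUnit_det _).2 hm.isUnit)).symm
    _ ≤ r := (hs m).rank_le u v fun j => (φ j : W →ₗ[𝕜] 𝕜)

end BorderRank

theorem IsPrimitiveRoot.sum_zpow_mul_eq_ite {K : Type*} [Field K] {ω : K} {N : ℕ}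
    (hω : IsPrimitiveRoot ω N) {t : ℤ} (ht : |t| < N) :
    ∑ k : Fin N, ω ^ ((k : ℤ) * t) = if t = 0 then (N : K) else 0 := by
  have hpow : ∀ k : Fin N, ω ^ ((k : ℤ) * t) = (ω ^ t) ^ (k : ℕ) := fun k => by
    rw [mul_comm, zpow_mul, zpow_natCast]
  simp_rw [hpow]
  rw [Fin.sum_univ_eq_sum_range (fun k => (ω ^ t) ^ k)]
  split_ifs with h0
  · simp [h0]
  · have hne : ω ^ t ≠ 1 := fun h =>
      h0 (Int.eq_zero_of_abs_lt_dvd ((hω.zpow_eq_one_iff_dvd t).1 h) ht)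
    have hpowN : (ω ^ t) ^ N = 1 := by
      rw [← zpow_natCast, ← zpow_mul, mul_comm, zpow_mul, zpow_natCast,
        hω.pow_eq_one, one_zpow]
    rw [geom_sum_eq hne, hpowN, sub_self, zero_div]

/-- The positions in the first row or the first column of an `n × n` matrix: every diagonal
contains exactly one of them. -/
abbrev DiagRep (n : ℕ) := {p : Fin n × Fin n // (p.1 : ℕ) = 0 ∨ (p.2 : ℕ) = 0}

namespace DiagRep

variable {n : ℕ}

def offset (p : DiagRep n) : ℤ := (p.1.2 : ℤ) - p.1.1

theorem offset_injective : Function.Injective (offset (n := n)) := by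
  rintro ⟨⟨i, j⟩, hp⟩ ⟨⟨k, l⟩, hq⟩ h
  simp only [offset] at h hp hq
  ext <;> simp only <;> omega

def ofEntry (i j : Fin n) : DiagRep n :=
  ⟨(⟨i - min (i : ℕ) j, by omega⟩, ⟨j - min (i : ℕ) j, by omega⟩), by simp only; omega⟩

theorem offset_ofEntry (i j : Fin n) : offset (ofEntry i j) = (j : ℤ) - i := by
  simp only [offset, ofEntry]
  omega

theorem abs_offset_lt (p : DiagRep n) : |offset p| < n := by
  have := p.1.1.isLt
  have := p.1.2.isLt
  rw [abs_lt, offset]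
  omega

theorem image_offset : univ.image (offset (n := n)) = Ioo (-(n : ℤ)) n := by
  ext t
  simp only [mem_image, mem_univ, true_and, mem_Ioo]
  constructor
  · rintro ⟨p, rfl⟩
    exact abs_lt.1 (abs_offset_lt p)
  · rintro ⟨ht₁, ht₂⟩
    refine ⟨ofEntry ⟨(-t).toNat, by omega⟩ ⟨t.toNat, by omega⟩, ?_⟩
    simp only [offset_ofEntry]
    omega

theorem card : Fintype.card (DiagRep n) = 2 * n - 1 := by
  rw [← card_univ, ← card_image_of_injective _ offset_injective, image_offset, Int.card_Ioo]
  omega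

end DiagRep

open scoped Matrix

namespace toeplitzSpace

open DiagRep

variable {n : ℕ}

theorem sum_diagRep_ite (A : toeplitzSpace n) (i j : Fin n) :
    ∑ p : DiagRep n,
        (if offset p = (j : ℤ) - i then (A : Matrix (Fin n) (Fin n) ℂ) p.1.1 p.1.2 else 0) =
      (A : Matrix (Fin n) (Fin n) ℂ) i j := by
  have hiff (p : DiagRep n) : offset p = (j : ℤ) - i ↔ p = ofEntry i j := by
    rw [← offset_ofEntry, offset_injective.eq_iff]
  simp_rw [hiff, Fintype.sum_ite_eq']
  exact A.2 _ _ _ _ (offset_ofEntry i j)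

theorem mulVec_eq_sum_fourier {ω : ℂ} (hω : IsPrimitiveRoot ω (2 * n - 1))
    (A : toeplitzSpace n) (x : Fin n → ℂ) :
    (A : Matrix (Fin n) (Fin n) ℂ) *ᵥ x = ∑ k : Fin (2 * n - 1),
      ((∑ p : DiagRep n, ω ^ (-(k * offset p)) * (A : Matrix (Fin n) (Fin n) ℂ) p.1.1 p.1.2) *
        ∑ j : Fin n, ω ^ ((k : ℤ) * j) * x j) •
      fun i : Fin n => ω ^ (-((k : ℤ) * i)) / (2 * n - 1 : ℕ) := by
  ext i
  have hN : 2 * n - 1 ≠ 0 := by have := i.isLt; omega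
  have hdelta (p : DiagRep n) (j : Fin n) :
      (∑ k : Fin (2 * n - 1), ω ^ ((k : ℤ) * (j - i - offset p))) / (2 * n - 1 : ℕ) =
        if offset p = (j : ℤ) - i then 1 else 0 := by
    have := abs_lt.1 (abs_offset_lt p)
    rw [hω.sum_zpow_mul_eq_ite (abs_lt.2 ⟨by omega, by omega⟩)]
    split_ifs <;> first | omega | simp [Nat.cast_ne_zero.2 hN]
  have hsplit (k : Fin (2 * n - 1)) (p : DiagRep n) (j : Fin n) :
      ω ^ ((k : ℤ) * (j - i - offset p)) =
        ω ^ (-(k * offset p)) * ω ^ ((k : ℤ) * j) * ω ^ (-((k : ℤ) * i)) := by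
    rw [← zpow_add₀ (hω.ne_zero hN), ← zpow_add₀ (hω.ne_zero hN)]
    ring_nf
  calc ((A : Matrix (Fin n) (Fin n) ℂ) *ᵥ x) i
      = ∑ j, ∑ p : DiagRep n, (A : Matrix (Fin n) (Fin n) ℂ) p.1.1 p.1.2 * x j *
          if offset p = (j : ℤ) - i then 1 else 0 := by
        simp [Matrix.mulVec, dotProduct, ← sum_diagRep_ite A i, sum_mul]
    _ = ∑ j, ∑ p : DiagRep n, ∑ k : Fin (2 * n - 1), (A : Matrix (Fin n) (Fin n) ℂ) p.1.1 p.1.2 *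
          x j * (ω ^ ((k : ℤ) * (j - i - offset p)) / (2 * n - 1 : ℕ)) := by
        simp_rw [← hdelta, sum_div, mul_sum]
    _ = _ := by
        simp only [Finset.sum_apply, Pi.smul_apply, smul_eq_mul, sum_mul, mul_sum, hsplit]
        conv_rhs => rw [Finset.sum_comm]
        refine sum_congr rfl fun j _ => ?_
        conv_rhs => rw [Finset.sum_comm]
        refine sum_congr rfl fun p _ => sum_congr rfl fun k _ => ?_
        ring

theorem hasTensorRankLE_mulVec (n : ℕ) :
    HasTensorRankLE ℂ (fun (A : toeplitzSpace n) (x : Fin n → ℂ) =>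
      (A : Matrix (Fin n) (Fin n) ℂ) *ᵥ x) (2 * n - 1) := by
  rcases Nat.eq_zero_or_pos n with rfl | hn
  · exact ⟨0, 0, 0, fun _ _ => Subsingleton.elim _ _⟩
  set ω := Complex.exp (2 * Real.pi * Complex.I / (2 * n - 1 : ℕ))
  have hω : IsPrimitiveRoot ω (2 * n - 1) := Complex.isPrimitiveRoot_exp _ (by omega)
  refine ⟨fun k => ∑ p : DiagRep n, ω ^ (-(k * offset p)) •
      (Matrix.entryLinearMap ℂ ℂ p.1.1 p.1.2 ∘ₗ (toeplitzSpace n).subtype),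
    fun k => ∑ j : Fin n, ω ^ ((k : ℤ) * j) • LinearMap.proj j,
    fun k i => ω ^ (-((k : ℤ) * i)) / (2 * n - 1 : ℕ), fun A x => ?_⟩
  simpa using mulVec_eq_sum_fourier hω A x

def diagOne (t : ℤ) : toeplitzSpace n :=
  ⟨Matrix.of fun i j => if (j : ℤ) - i = t then 1 else 0, fun i j k l h => by simp [h]⟩

theorem of_diagOne_offset_apply :
    (Matrix.of fun p q : DiagRep n =>
      ((diagOne (offset p) : toeplitzSpace n) : Matrix (Fin n) (Fin n) ℂ) q.1.1 q.1.2) = 1 := by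
  ext p q
  change (if offset q = offset p then (1 : ℂ) else 0) = _
  simp only [offset_injective.eq_iff, Matrix.one_apply, eq_comm]

end toeplitzSpace

/-- The structure tensor `μ_t` of the Toeplitz matrix-vector product
`Toep_n(ℂ) × ℂ^n → ℂ^n`, `(A, x) ↦ Ax`, has border rank `2n − 1`. -/
theorem borderRank_toeplitz_mulVec (n : ℕ) :
    borderRank ℂ (fun (A : toeplitzSpace n) (x : Fin n → ℂ) =>
        (A : Matrix (Fin n) (Fin n) ℂ).mulVec x) = 2 * n - 1 := by
  refine le_antisymm (borderRank_le_of_hasTensorRankLE (toeplitzSpace.hasTensorRankLE_mulVec n)) ?_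
  rw [← DiagRep.card]
  refine card_le_borderRank_of_det_ne_zero (toeplitzSpace.hasTensorRankLE_mulVec n)
    (fun p => toeplitzSpace.diagOne (DiagRep.offset p)) (fun p => Pi.single p.1.2 1)
    (fun p => ContinuousLinearMap.proj p.1.1) ?_
  simp [toeplitzSpace.of_diagOne_offset_apply]
end

section
/- Let Toep_n^Δ(ℂ) be the space of n×n upper triangular Toeplitz matrices and let β_Δ : Toep_n^Δ(ℂ) × ℂ^n → ℂ^n, (A, v) ↦ Av, be the upper triangular Toeplitz matrix-vector product with structure tensor μ_Δ. Then rank(μ_Δ) = 2n − 1. -/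
open Filter Topology

/-- The space `Toep_n^Δ(ℂ)` of `n × n` upper triangular Toeplitz matrices: entries depend only
on `j − i` and vanish below the diagonal. -/
noncomputable def upperToeplitzSpace (n : ℕ) : Submodule ℂ (Matrix (Fin n) (Fin n) ℂ) where
  carrier := {A | (∀ i j k l : Fin n, (j : ℤ) - (i : ℤ) = (l : ℤ) - (k : ℤ) → A i j = A k l) ∧
    ∀ i j : Fin n, j < i → A i j = 0}
  add_mem' := by
    rintro A B ⟨hA1, hA2⟩ ⟨hB1, hB2⟩
    constructor
    · intro i j k l h
      simp [Matrix.add_apply, hA1 i j k l h, hB1 i j k l h]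
    · intro i j h
      simp [Matrix.add_apply, hA2 i j h, hB2 i j h]
  zero_mem' := by
    constructor
    · intro i j k l _; simp
    · intro i j _; simp
  smul_mem' := by
    rintro c A ⟨h1, h2⟩
    constructor
    · intro i j k l h
      simp [Matrix.smul_apply, h1 i j k l h]
    · intro i j h
      simp [Matrix.smul_apply, h2 i j h]

/-!
Reversing the order of the vector entries and of the output turns the upper triangular Toeplitz
product into multiplication in `ℂ[X] ⧸ (X ^ n)`, the matrix being encoded by its first row.

Upper bound: the product of two polynomials of degree `< n` has degree `< 2n - 1`, so by Lagrange
interpolation it is a linear function of its values at `2n - 1` points, and each value is a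
product of two linear forms.

Lower bound, by induction on `n` with the substitution method: in a decomposition of
multiplication modulo `X ^ (n + 1)`, replacing the first factor by its projection along `X ^ n`
onto the kernel of one rank-one term, and then the second factor likewise for another term,
removes two terms. The coefficients below `X ^ n` are unaffected by these projections, so what
remains computes multiplication modulo `X ^ n`.
-/

open Polynomial

section TensorRank

variable {K : Type*} [Field K] {U V W U' V' W' : Type*}
  [AddCommGroup U] [Module K U] [AddCommGroup V] [Module K V] [AddCommGroup W] [Module K W]
  [AddCommGroup U'] [Module K U'] [AddCommGroup V'] [Module K V'] [AddCommGroup W'] [Module K W']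
  {β : U → V → W} {r : ℕ}

theorem HasTensorRankLE.comp (h : HasTensorRankLE K β r)
    (φ : U' →ₗ[K] U) (ψ : V' →ₗ[K] V) (χ : W →ₗ[K] W') :
    HasTensorRankLE K (fun u v => χ (β (φ u) (ψ v))) r := by
  obtain ⟨f, g, w, hβ⟩ := h
  exact ⟨fun i => f i ∘ₗ φ, fun i => g i ∘ₗ ψ, fun i => χ (w i),
    fun u v => by simp [hβ]⟩

theorem tensorRank_comp_linearEquiv (β : U → V → W)
    (eU : U' ≃ₗ[K] U) (eV : V' ≃ₗ[K] V) (eW : W ≃ₗ[K] W') :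
    tensorRank K (fun u v => eW (β (eU u) (eV v))) = tensorRank K β := by
  unfold tensorRank
  congr 1
  ext r
  refine ⟨fun h => ?_, fun h => h.comp eU.toLinearMap eV.toLinearMap eW.toLinearMap⟩
  simpa using h.comp eU.symm.toLinearMap eV.symm.toLinearMap eW.symm.toLinearMap

theorem HasTensorRankLE.swap (h : HasTensorRankLE K β r) :
    HasTensorRankLE K (fun v u => β u v) r := by
  obtain ⟨f, g, w, hβ⟩ := h
  exact ⟨g, f, w, fun v u => by simp [hβ, mul_comm]⟩

theorem HasTensorRankLE.ne_zero (h : HasTensorRankLE K β r) {x : U} {y : V} (hxy : β x y ≠ 0) :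
    r ≠ 0 := by
  rintro rfl
  obtain ⟨f, g, w, hβ⟩ := h
  simp [hβ] at hxy

/-- The substitution method: `u ↦ u + c u • x` projects along `x` onto the kernel of a rank-one
term that does not vanish at `x`. -/
theorem HasTensorRankLE.exists_substitution_left (h : HasTensorRankLE K β (r + 1))
    {x : U} {y : V} (hxy : β x y ≠ 0) :
    ∃ c : U →ₗ[K] K, HasTensorRankLE K (fun u v => β (u + c u • x) v) r := by
  obtain ⟨f, g, w, hβ⟩ := h
  obtain ⟨p, hp⟩ : ∃ p, f p x ≠ 0 := by
    by_contra! hf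
    simp [hβ, hf] at hxy
  set c : U →ₗ[K] K := -(f p x)⁻¹ • f p
  set σ : U →ₗ[K] U := LinearMap.id + c.smulRight x
  have hσ : ∀ u, f p (σ u) = 0 := fun u => by
    simp [σ, c, mul_right_comm _ (f p u), hp]
  refine ⟨c, fun j => f (p.succAbove j) ∘ₗ σ, fun j => g (p.succAbove j),
    fun j => w (p.succAbove j), fun u v => ?_⟩
  change β (σ u) v = _
  rw [hβ, Fin.sum_univ_succAbove _ p, hσ, zero_mul, zero_smul, zero_add]
  rfl

theorem HasTensorRankLE.exists_substitution_right (h : HasTensorRankLE K β (r + 1))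
    {x : U} {y : V} (hxy : β x y ≠ 0) :
    ∃ c : V →ₗ[K] K, HasTensorRankLE K (fun u v => β u (v + c v • y)) r := by
  obtain ⟨c, hc⟩ := h.swap.exists_substitution_left (β := fun v u => β u v) hxy
  exact ⟨c, hc.swap⟩

end TensorRank

section TruncatedMul

variable (K : Type*) [Field K]

/-- Multiplication in `K[X] ⧸ (X ^ n)`, with both factors and the product written in the
monomial basis. -/
noncomputable def truncatedMul (n : ℕ) (p q : degreeLT K n) : Fin n → K :=
  fun i => ((p : K[X]) * q).coeff i

variable {K}

theorem degree_mul_lt_of_mem_degreeLT {m k : ℕ} {p q : K[X]} (hp : p ∈ degreeLT K m)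
    (hq : q ∈ degreeLT K k) : (p * q).degree < ↑(m + k - 1) := by
  rcases eq_or_ne p 0 with rfl | hp0
  · simp
  rcases eq_or_ne q 0 with rfl | hq0
  · simp
  rw [mem_degreeLT, degree_eq_natDegree hp0, Nat.cast_lt] at hp
  rw [mem_degreeLT, degree_eq_natDegree hq0, Nat.cast_lt] at hq
  rw [degree_mul, degree_eq_natDegree hp0, degree_eq_natDegree hq0, ← Nat.cast_add, Nat.cast_lt]
  omega

/-- Evaluation at `m + k - 1` distinct points followed by Lagrange interpolation. -/
theorem hasTensorRankLE_mul_degreeLT [Infinite K] {W : Type*} [AddCommGroup W] [Module K W]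
    (m k : ℕ) (χ : K[X] →ₗ[K] W) :
    HasTensorRankLE K (fun (p : degreeLT K m) (q : degreeLT K k) => χ (p * q)) (m + k - 1) := by
  set z : Fin (m + k - 1) → K := fun i => Infinite.natEmbedding K i
  have hz : Set.InjOn z (Finset.univ : Finset (Fin (m + k - 1))) := fun i _ j _ hij =>
    Fin.ext ((Infinite.natEmbedding K).injective hij)
  refine ⟨fun i => leval (z i) ∘ₗ (degreeLT K m).subtype,
    fun i => leval (z i) ∘ₗ (degreeLT K k).subtype,
    fun i => χ (Lagrange.basis Finset.univ z i), fun p q => ?_⟩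
  have hpq := Lagrange.eq_interpolate (f := (p : K[X]) * (q : K[X])) hz
    (by simpa using degree_mul_lt_of_mem_degreeLT p.2 q.2)
  change χ (p * q : K[X]) = _
  rw [hpq, Lagrange.interpolate_apply, map_sum]
  refine Finset.sum_congr rfl fun i _ => ?_
  rw [C_mul', map_smul, eval_mul]
  rfl

theorem hasTensorRankLE_truncatedMul [Infinite K] (n : ℕ) :
    HasTensorRankLE K (truncatedMul K n) (2 * n - 1) := by
  rw [two_mul]
  exact hasTensorRankLE_mul_degreeLT n n (LinearMap.pi fun i : Fin n => lcoeff K i)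

theorem coeff_add_smul_X_pow_mul_add_smul_X_pow {n i : ℕ} (hi : i < n) (p q : K[X]) (a b : K) :
    ((p + a • X ^ n) * (q + b • X ^ n)).coeff i = (p * q).coeff i := by
  have : (p + a • X ^ n) * (q + b • X ^ n) =
      p * q + X ^ n * (a • q + b • p + (a * b) • X ^ n) := by
    simp only [smul_eq_C_mul, C_mul]
    ring
  rw [this, coeff_add, coeff_X_pow_mul', if_neg (by omega), add_zero]

theorem truncatedMul_inclusion_add_smul_basis_last {n : ℕ} (p q : degreeLT K n) (a b : K)
    (i : Fin n) :
    truncatedMul K (n + 1)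
        (Submodule.inclusion (degreeLT_mono n.le_succ) p +
          a • degreeLT.basis K (n + 1) (Fin.last n))
        (Submodule.inclusion (degreeLT_mono n.le_succ) q +
          b • degreeLT.basis K (n + 1) (Fin.last n))
        i.castSucc =
      truncatedMul K n p q i := by
  simpa [truncatedMul] using coeff_add_smul_X_pow_mul_add_smul_X_pow i.2 (p : K[X]) q a b

theorem le_of_hasTensorRankLE_truncatedMul {n r : ℕ}
    (h : HasTensorRankLE K (truncatedMul K n) r) : 2 * n - 1 ≤ r := by
  induction n generalizing r with
  | zero => omega
  | succ n ih =>
    set x := degreeLT.basis K (n + 1) (Fin.last n)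
    set one := degreeLT.basis K (n + 1) 0
    have hx1 : truncatedMul K (n + 1) x one ≠ 0 :=
      Function.ne_iff.mpr ⟨Fin.last n, by simp [truncatedMul, x, one]⟩
    obtain ⟨r, rfl⟩ := Nat.exists_eq_add_one_of_ne_zero (h.ne_zero hx1)
    obtain ⟨c, hc⟩ := h.exists_substitution_left hx1
    rcases Nat.eq_zero_or_pos n with rfl | hn
    · omega
    have h1x : truncatedMul K (n + 1) (one + c one • x) x ≠ 0 :=
      Function.ne_iff.mpr ⟨Fin.last n, by
        simp [truncatedMul, x, one, add_mul, ← pow_add, coeff_X_pow, hn.ne']⟩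
    obtain ⟨r, rfl⟩ := Nat.exists_eq_add_one_of_ne_zero (hc.ne_zero h1x)
    obtain ⟨d, hd⟩ := hc.exists_substitution_right h1x
    have htrunc : HasTensorRankLE K (truncatedMul K n) r := by
      let ι := Submodule.inclusion (degreeLT_mono (R := K) n.le_succ)
      have heq : truncatedMul K n = fun p q => LinearMap.funLeft K K Fin.castSucc
          (truncatedMul K (n + 1) (ι p + c (ι p) • x) (ι q + d (ι q) • x)) := by
        funext p q i
        exact (truncatedMul_inclusion_add_smul_basis_last p q _ _ i).symm
      rw [heq]
      exact hd.comp ι ι (LinearMap.funLeft K K Fin.castSucc)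
    have := ih htrunc
    omega

theorem tensorRank_truncatedMul (K : Type*) [Field K] [Infinite K] (n : ℕ) :
    tensorRank K (truncatedMul K n) = 2 * n - 1 :=
  le_antisymm (Nat.sInf_le (hasTensorRankLE_truncatedMul n))
    (le_csInf ⟨_, hasTensorRankLE_truncatedMul n⟩ fun _ => le_of_hasTensorRankLE_truncatedMul)

end TruncatedMul

section Toeplitz

noncomputable def toeplitzOfPoly {R : Type*} [CommRing R] (n : ℕ) (p : R[X]) :
    Matrix (Fin n) (Fin n) R :=
  Matrix.of fun i j => (X ^ (i : ℕ) * p).coeff j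

theorem toeplitzOfPoly_apply {R : Type*} [CommRing R] {n : ℕ} (p : R[X]) (i j : Fin n) :
    toeplitzOfPoly n p i j = if i ≤ j then p.coeff (j - i) else 0 :=
  coeff_X_pow_mul' p i j

theorem toeplitzOfPoly_mulVec_apply {R : Type*} [CommRing R] {n : ℕ} (p : R[X]) (v : Fin n → R)
    (i : Fin n) :
    (toeplitzOfPoly n p).mulVec v i =
      (p * (degreeLTEquiv R n).symm (v ∘ Fin.rev)).coeff i.rev := by
  have hq : ((degreeLTEquiv R n).symm (v ∘ Fin.rev) : R[X]) = ∑ j, monomial j.rev (v j) :=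
    Fintype.sum_equiv Fin.revPerm _ _ fun k => by simp
  rw [hq, Finset.mul_sum, finsetSum_coeff, Matrix.mulVec, dotProduct]
  refine Finset.sum_congr rfl fun j _ => ?_
  rw [toeplitzOfPoly_apply, ← C_mul_X_pow_eq_monomial, mul_left_comm, coeff_C_mul,
    coeff_mul_X_pow', mul_comm]
  congr 1
  refine if_congr ?_ (congrArg _ ?_) rfl <;> simp only [Fin.le_def, Fin.val_rev] <;> omega

theorem toeplitzOfPoly_mem_upperToeplitzSpace {n : ℕ} (p : ℂ[X]) :
    toeplitzOfPoly n p ∈ upperToeplitzSpace n := by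
  refine ⟨fun i j k l hijkl => ?_, fun i j hji => ?_⟩
  · simp only [toeplitzOfPoly_apply, Fin.le_def]
    exact if_congr (by omega) (congrArg _ (by omega)) rfl
  · rw [toeplitzOfPoly_apply, if_neg (not_le.mpr hji)]

theorem coeff_degreeLTEquiv_symm {R : Type*} [CommRing R] {n : ℕ} (f : Fin n → R) (j : Fin n) :
    ((degreeLTEquiv R n).symm f : R[X]).coeff j = f j :=
  congrFun ((degreeLTEquiv R n).apply_symm_apply f) j

theorem toeplitzOfPoly_firstRow {n : ℕ} {A : Matrix (Fin n) (Fin n) ℂ}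
    (hA : A ∈ upperToeplitzSpace n) :
    toeplitzOfPoly n ((degreeLTEquiv ℂ n).symm fun j => A ⟨0, j.pos⟩ j) = A := by
  ext i j
  rw [toeplitzOfPoly_apply]
  split_ifs with hij
  · have hji : (j : ℕ) - i < n := by omega
    refine (coeff_degreeLTEquiv_symm _ ⟨j - i, hji⟩).trans (hA.1 _ _ _ _ ?_)
    rw [Fin.le_def] at hij
    simp [hij]
  · exact (hA.2 i j (not_le.mp hij)).symm

noncomputable def upperToeplitzEquivDegreeLT (n : ℕ) :
    upperToeplitzSpace n ≃ₗ[ℂ] degreeLT ℂ n where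
  toFun A := (degreeLTEquiv ℂ n).symm fun j => (A : Matrix (Fin n) (Fin n) ℂ) ⟨0, j.pos⟩ j
  map_add' A B := by rw [← map_add]; rfl
  map_smul' c A := by rw [← map_smul]; rfl
  invFun p := ⟨toeplitzOfPoly n p, toeplitzOfPoly_mem_upperToeplitzSpace p⟩
  left_inv A := Subtype.ext (toeplitzOfPoly_firstRow A.2)
  right_inv p := (degreeLTEquiv ℂ n).symm_apply_eq.mpr <| funext fun j => by
    simp [toeplitzOfPoly, degreeLTEquiv]

end Toeplitz

/-- The structure tensor `μ_Δ` of the upper triangular Toeplitz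
matrix-vector product `Toep_n^Δ(ℂ) × ℂ^n → ℂ^n`, `(A, v) ↦ Av`, has rank `2n − 1`. -/
theorem tensorRank_upperToeplitz_mulVec (n : ℕ) :
    tensorRank ℂ (fun (A : upperToeplitzSpace n) (v : Fin n → ℂ) =>
        (A : Matrix (Fin n) (Fin n) ℂ).mulVec v) = 2 * n - 1 := by
  set rev := LinearEquiv.funCongrLeft ℂ ℂ (Fin.revPerm (n := n))
  have h : (fun (A : upperToeplitzSpace n) (v : Fin n → ℂ) =>
      (A : Matrix (Fin n) (Fin n) ℂ).mulVec v) = fun A v =>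
        rev (truncatedMul ℂ n (upperToeplitzEquivDegreeLT n A)
          ((rev.trans (degreeLTEquiv ℂ n).symm) v)) := by
    funext A v i
    conv_lhs => rw [← (upperToeplitzEquivDegreeLT n).symm_apply_apply A]
    exact toeplitzOfPoly_mulVec_apply _ v i
  rw [h, tensorRank_comp_linearEquiv, tensorRank_truncatedMul]
end
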